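/- arXiv:1706.08469 — 8 statements merged into one kernel-verified Lean document; each statement's English description precedes it below -/
import Mathlib

section
/- For all positive integers r and n with r even, F_r * (∑_{k=1}^n F_{2rk}) = F_{rn} * F_{rn+r}. -/
open Finset

def L : ℕ → ℤ
  | 0 => 2
  | 1 => 1
  | n + 2 => L (n + 1) + L n

def F (n : ℕ) : ℤ := Nat.fib n

/-!
Extend the Fibonacci numbers to negative indices. For even `r` one has `F (-r) = -F r` and
`F (1 - r) = F (r - 1)`, so the addition formula gives
`F (m + r) - F (m - r) = F r * (F (m - 1) + F (m + 1))`, while `F (2 * m) = F m * (F (m - 1) + F (m + 1))`.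
Hence `F r * F (2 * r * k) = F (r * k) * F (r * k + r) - F (r * k - r) * F (r * k)`, and the sum telescopes.
-/

namespace Int

theorem fib_two_mul_eq_fib_mul_fib_pred_add_fib_succ (m : ℤ) :
    fib (2 * m) = fib m * (fib (m - 1) + fib (m + 1)) := by
  rw [two_mul, fib_add]
  ring

theorem fib_add_sub_fib_sub_of_even {r : ℤ} (hr : Even r) (m : ℤ) :
    fib (m + r) - fib (m - r) = fib r * (fib (m - 1) + fib (m + 1)) := by
  have h_neg : fib (-r) = -fib r := by rw [fib_neg, if_pos hr]
  have h_one_sub : fib (-r + 1) = fib (r - 1) := by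
    rw [show -r + 1 = -(r - 1) by ring, fib_neg, if_neg (by simpa using hr.sub_odd odd_one)]
  have h_succ : fib (r + 1) = fib (r - 1) + fib r := by
    rw [show r + 1 = r - 1 + 2 by ring, fib_add_two, sub_add_cancel]
  have h_m_succ : fib (m + 1) = fib (m - 1) + fib m := by
    rw [show m + 1 = m - 1 + 2 by ring, fib_add_two, sub_add_cancel]
  rw [fib_add m r, sub_eq_add_neg m r, fib_add m (-r), h_neg, h_one_sub, h_succ, h_m_succ]
  ring

theorem fib_mul_fib_two_mul_of_even {r : ℤ} (hr : Even r) (m : ℤ) :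
    fib r * fib (2 * m) = fib m * (fib (m + r) - fib (m - r)) := by
  rw [fib_two_mul_eq_fib_mul_fib_pred_add_fib_succ, fib_add_sub_fib_sub_of_even hr]
  ring

theorem fib_mul_sum_fib_two_mul_mul_of_even {r : ℤ} (hr : Even r) (n : ℕ) :
    fib r * ∑ k ∈ Icc 1 n, fib (2 * r * k) = fib (r * n) * fib (r * n + r) := by
  induction n with
  | zero => simp
  | succ n ih =>
    have h_step := fib_mul_fib_two_mul_of_even hr (r * n + r)
    rw [add_sub_cancel_right] at h_step
    rw [sum_Icc_succ_top (by omega), mul_add, ih]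
    push_cast
    rw [show 2 * r * (n + 1) = 2 * (r * n + r) by ring, h_step, show r * (n + 1) = r * n + r by ring]
    ring

end Int

theorem stmt0_general (r n : ℕ) (hre : Even r) :
    F r * ∑ k ∈ Finset.Icc 1 n, F (2 * r * k) = F (r * n) * F (r * n + r) := by
  have h := Int.fib_mul_sum_fib_two_mul_mul_of_even (Int.even_coe_nat r |>.mpr hre) n
  simp only [F, ← Int.fib_natCast]
  push_cast
  exact h

theorem stmt0 (r n : ℕ) (hr : 0 < r) (hn : 0 < n) (hre : Even r) :
    F r * ∑ k ∈ Finset.Icc 1 n, F (2 * r * k) = F (r * n) * F (r * n + r) :=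
  stmt0_general r n hre
end

section
/- For all positive integers r and n with r odd, L_r * (∑_{k=1}^n F_{2rk}) = F_{rn} * L_{rn+r} if n is even, and L_r * (∑_{k=1}^n F_{2rk}) = L_{rn} * F_{rn+r} if n is odd. -/
/-!
For odd `s`, every sequence `a` with `a (n + 2) = a (n + 1) + a n` satisfies
`a (m + 2 s) = a m + L s * a (m + s)`; for `a = F`, `m = 0` this also gives `F (2 t) = F t * L t`.
Adding the new summand `L r * F (2 (r n + r)) = L r * F (r n + r) * L (r n + r)` to the
closed form for `n` therefore turns `F (r n) * L (r n + r)` into `L (r n + r) * F (r n + 2 r)`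
and `L (r n) * F (r n + r)` into `F (r n + r) * L (r n + 2 r)`, and the theorem follows by
induction on `n`, alternating between the two cases.
-/

open Finset

def IsFibonacciLike (a : ℕ → ℤ) : Prop := ∀ n, a (n + 2) = a (n + 1) + a n

lemma isFibonacciLike_F : IsFibonacciLike F := fun n => by
  simp only [F, Nat.fib_add_two, Nat.cast_add, add_comm]

lemma isFibonacciLike_L : IsFibonacciLike L := fun _ => rfl

namespace IsFibonacciLike

variable {a : ℕ → ℤ}

/-- The instances `s + 1` at `m + 1` and `s` at `m + 2` add up to the instance `s + 2` at `m`. -/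
theorem add_two_mul (ha : IsFibonacciLike a) :
    ∀ s m, a (m + 2 * s) = L s * a (m + s) - (-1) ^ s * a m
  | 0, m => by simp only [L, mul_zero, add_zero, pow_zero]; ring
  | 1, m => by simp only [L, ha m, pow_one]; ring
  | s + 2, m => by
    have h1 := ha.add_two_mul (s + 1) (m + 1)
    have h0 := ha.add_two_mul s (m + 2)
    rw [show m + 1 + 2 * (s + 1) = m + 2 * s + 3 by ring,
      show m + 1 + (s + 1) = m + s + 2 by ring] at h1
    rw [show m + 2 + 2 * s = m + 2 * s + 2 by ring, show m + 2 + s = m + s + 2 by ring] at h0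
    rw [show m + 2 * (s + 2) = m + 2 * s + 2 + 2 by ring, ha,
      show m + 2 * s + 2 + 1 = m + 2 * s + 3 by ring, h1, h0, isFibonacciLike_L, ha m, ← add_assoc]
    ring

lemma add_two_mul_of_odd (ha : IsFibonacciLike a) {s : ℕ} (hs : Odd s) (m : ℕ) :
    a (m + 2 * s) = a m + L s * a (m + s) := by
  rw [ha.add_two_mul, hs.neg_one_pow]
  ring

end IsFibonacciLike

lemma F_two_mul (n : ℕ) : F (2 * n) = F n * L n := by
  simpa [F, mul_comm] using isFibonacciLike_F.add_two_mul n 0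

lemma L_mul_sum_Icc_succ (r n : ℕ) :
    L r * ∑ k ∈ Icc 1 (n + 1), F (2 * r * k)
      = L r * ∑ k ∈ Icc 1 n, F (2 * r * k) + L r * F (r * n + r) * L (r * n + r) := by
  rw [sum_Icc_succ_top (by omega), mul_add, show 2 * r * (n + 1) = 2 * (r * n + r) by ring,
    F_two_mul, mul_assoc]

theorem stmt1_general (r n : ℕ) (hro : Odd r) :
    (Even n → L r * ∑ k ∈ Finset.Icc 1 n, F (2 * r * k) = F (r * n) * L (r * n + r)) ∧
    (Odd n → L r * ∑ k ∈ Finset.Icc 1 n, F (2 * r * k) = L (r * n) * F (r * n + r)) := by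
  induction n with
  | zero => simp [F]
  | succ n ih =>
    rw [mul_add_one, show r * n + r + r = r * n + 2 * r by ring, L_mul_sum_Icc_succ]
    rcases n.even_or_odd with hn | hn
    · refine ⟨fun h => absurd h (Nat.not_even_iff_odd.mpr hn.add_one), fun _ => ?_⟩
      rw [ih.1 hn, isFibonacciLike_F.add_two_mul_of_odd hro]
      ring
    · refine ⟨fun _ => ?_, fun h => absurd h (Nat.not_odd_iff_even.mpr hn.add_one)⟩
      rw [ih.2 hn, isFibonacciLike_L.add_two_mul_of_odd hro]
      ring

theorem stmt1 (r n : ℕ) (hr : 0 < r) (hn : 0 < n) (hro : Odd r) :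
    (Even n → L r * ∑ k ∈ Finset.Icc 1 n, F (2 * r * k) = F (r * n) * L (r * n + r)) ∧
    (Odd n → L r * ∑ k ∈ Finset.Icc 1 n, F (2 * r * k) = L (r * n) * F (r * n + r)) :=
  stmt1_general r n hro
end

section
/- For all positive integers r and n with r even, F_r * (∑_{k=1}^n L_{2rk}) = F_{rn} * L_{rn+r}. -/
open Finset

/-
With the sign `(-1) ^ a`, the product `F a * L (a + b)` is a difference of two Fibonacci numbers
(a consequence of the addition formula and d'Ocagne's identity). For even `r` this makes
`F r * L (2 * r * k) = F ((2 * k + 1) * r) - F ((2 * k - 1) * r)`, so the sum telescopes to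
`F ((2 * n + 1) * r) - F r`, which is again `F (r * n) * L (r * n + r)`.
-/

lemma F_add_two (n : ℕ) : F (n + 2) = F n + F (n + 1) := by
  simp only [F, Nat.fib_add_two, Nat.cast_add]

lemma L_add_one : ∀ n, L (n + 1) = F n + F (n + 2)
  | 0 => by norm_num [L, F]
  | 1 => by norm_num [L, F]
  | n + 2 => by
    show L (n + 2) + L (n + 1) = _
    rw [L_add_one n, L_add_one (n + 1), F_add_two (n + 2), F_add_two n]
    ring

lemma F_add_mul_F_succ_sub_F_mul_F_add_succ (n k : ℕ) :
    F (n + k) * F (n + 1) - F n * F (n + k + 1) = (-1) ^ n * F k := by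
  induction n with
  | zero => simp [F]
  | succ n ih =>
    rw [show n + 1 + k = n + k + 1 by ring, F_add_two n, F_add_two (n + k), pow_succ]
    linear_combination -ih

lemma F_mul_L_add (a b : ℕ) : F a * L (a + b) = F (2 * a + b) - (-1) ^ a * F b := by
  rcases a with _ | c
  · simp [F]
  have hL : L (c + 1 + b) = F (c + b) + F (c + b + 2) := by
    rw [show c + 1 + b = c + b + 1 by ring, L_add_one]
  have hF : F (2 * (c + 1) + b) = F (c + 1) * F (c + b) + F (c + 2) * F (c + b + 1) := by
    rw [show 2 * (c + 1) + b = c + 1 + (c + b) + 1 by ring]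
    simp only [F, Nat.fib_add, Nat.cast_add, Nat.cast_mul]
  have hd := F_add_mul_F_succ_sub_F_mul_F_add_succ (c + 1) b
  rw [show c + 1 + b + 1 = c + b + 2 by ring, show c + 1 + b = c + b + 1 by ring,
    show c + 1 + 1 = c + 2 by ring] at hd
  rw [hL, hF]
  linear_combination -hd

lemma F_mul_L_add_of_even {a : ℕ} (ha : Even a) (b : ℕ) :
    F a * L (a + b) = F (2 * a + b) - F b := by
  rw [F_mul_L_add, ha.neg_one_pow, one_mul]

lemma F_mul_sum_L_two_mul {r : ℕ} (hr : Even r) (n : ℕ) :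
    F r * ∑ k ∈ Icc 1 n, L (2 * r * k) = F (2 * r * n + r) - F r := by
  induction n with
  | zero => simp
  | succ n ih =>
    have hstep : F r * L (2 * r * (n + 1)) = F (2 * r * (n + 1) + r) - F (2 * r * n + r) := by
      rw [show 2 * r * (n + 1) = r + (2 * r * n + r) by ring, F_mul_L_add_of_even hr]
      ring_nf
    rw [sum_Icc_succ_top (by omega), mul_add, ih, hstep]
    ring

theorem stmt2_general (r n : ℕ) (hre : Even r) :
    F r * ∑ k ∈ Finset.Icc 1 n, L (2 * r * k) = F (r * n) * L (r * n + r) := by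
  rw [F_mul_sum_L_two_mul hre, F_mul_L_add_of_even (hre.mul_right n),
    show 2 * (r * n) + r = 2 * r * n + r by ring]

theorem stmt2 (r n : ℕ) (hr : 0 < r) (hn : 0 < n) (hre : Even r) :
    F r * ∑ k ∈ Finset.Icc 1 n, L (2 * r * k) = F (r * n) * L (r * n + r) :=
  stmt2_general r n hre
end

section
/- For all positive integers r and n with r odd, L_r * (∑_{k=1}^n L_{2rk}) = 5 * F_{rn} * F_{rn+r} if n is even, and L_r * (∑_{k=1}^n L_{2rk}) = L_{rn} * L_{rn+r} if n is odd. -/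
/-! By Binet's formulas `L n = φⁿ + ψⁿ` and `√5 F n = φⁿ - ψⁿ`, together with `φψ = -1`,
`L (m+n) L n = L (m+2n) + (-1)ⁿ L m` and `5 F (m+n) F n = L (m+2n) - (-1)ⁿ L m`.
For odd `r` the first gives `L r L (2rk) = L (r(2k+1)) - L (r(2k-1))`, so the sum telescopes
to `L (r(2n+1)) - L r`; taking `m = r` and `rn` for `n`, this is `5 F (rn) F (rn+r)` or
`L (rn) L (rn+r)` according to the parity of `rn`. -/

open Finset

open Real goldenRatio

theorem pow_add_pow_mul_pow_add_pow {R : Type*} [CommRing R] (a b : R) (m n : ℕ) :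
    (a ^ (m + n) + b ^ (m + n)) * (a ^ n + b ^ n) =
      a ^ (m + 2 * n) + b ^ (m + 2 * n) + (a * b) ^ n * (a ^ m + b ^ m) := by
  ring

theorem pow_sub_pow_mul_pow_sub_pow {R : Type*} [CommRing R] (a b : R) (m n : ℕ) :
    (a ^ (m + n) - b ^ (m + n)) * (a ^ n - b ^ n) =
      a ^ (m + 2 * n) + b ^ (m + 2 * n) - (a * b) ^ n * (a ^ m + b ^ m) := by
  ring

theorem cast_L_eq (n : ℕ) : (L n : ℝ) = φ ^ n + ψ ^ n := by
  induction n using Nat.twoStepInduction with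
  | zero => norm_num [L]
  | one => simp [L, goldenRatio_add_goldenConj]
  | more n ih₀ ih₁ =>
    rw [L, Int.cast_add, ih₀, ih₁]
    linear_combination -(φ ^ n * goldenRatio_sq + ψ ^ n * goldenConj_sq)

theorem sqrt_five_mul_cast_F (n : ℕ) : √5 * F n = φ ^ n - ψ ^ n := by
  rw [F, Int.cast_natCast, coe_fib_eq, mul_div_cancel₀ _ (by positivity)]

theorem L_add_mul_L (m n : ℕ) : L (m + n) * L n = L (m + 2 * n) + (-1) ^ n * L m := by
  apply Int.cast_injective (α := ℝ)
  push_cast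
  rw [cast_L_eq, cast_L_eq, cast_L_eq, cast_L_eq, pow_add_pow_mul_pow_add_pow,
    goldenRatio_mul_goldenConj]

theorem five_mul_F_add_mul_F (m n : ℕ) :
    5 * F (m + n) * F n = L (m + 2 * n) - (-1) ^ n * L m := by
  apply Int.cast_injective (α := ℝ)
  have h5 : √5 * √5 = (5 : ℝ) := Real.mul_self_sqrt (by norm_num)
  calc ((5 * F (m + n) * F n : ℤ) : ℝ) = (√5 * F (m + n)) * (√5 * F n) := by
        push_cast
        linear_combination -(F (m + n) * F n : ℝ) * h5
    _ = ((L (m + 2 * n) - (-1) ^ n * L m : ℤ) : ℝ) := by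
        push_cast
        rw [sqrt_five_mul_cast_F, sqrt_five_mul_cast_F, pow_sub_pow_mul_pow_sub_pow,
          goldenRatio_mul_goldenConj, cast_L_eq, cast_L_eq]

theorem L_mul_sum_L_two_mul {r : ℕ} (hr : Odd r) (n : ℕ) :
    L r * ∑ k ∈ Icc 1 n, L (2 * r * k) = L (r * (2 * n + 1)) - L r := by
  induction n with
  | zero => simp
  | succ n ih =>
    have h := L_add_mul_L (r * (2 * n + 1)) r
    rw [show r * (2 * n + 1) + r = 2 * r * (n + 1) by ring,
      show r * (2 * n + 1) + 2 * r = r * (2 * (n + 1) + 1) by ring, hr.neg_one_pow] at h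
    rw [sum_Icc_succ_top (by omega), mul_add, ih]
    linear_combination h

theorem stmt3_general (r n : ℕ) (hro : Odd r) :
    (Even n → L r * ∑ k ∈ Finset.Icc 1 n, L (2 * r * k) = 5 * F (r * n) * F (r * n + r)) ∧
    (Odd n → L r * ∑ k ∈ Finset.Icc 1 n, L (2 * r * k) = L (r * n) * L (r * n + r)) := by
  have hsum := L_mul_sum_L_two_mul hro n
  have hidx : r * (2 * n + 1) = r + 2 * (r * n) := by ring
  constructor
  · intro hn
    have h := five_mul_F_add_mul_F r (r * n)
    rw [add_comm r, ← hidx, (hn.mul_left r).neg_one_pow] at h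
    rw [hsum]
    linear_combination -h
  · intro hn
    have h := L_add_mul_L r (r * n)
    rw [add_comm r, ← hidx, (hro.mul hn).neg_one_pow] at h
    rw [hsum]
    linear_combination -h

theorem stmt3 (r n : ℕ) (hr : 0 < r) (hn : 0 < n) (hro : Odd r) :
    (Even n → L r * ∑ k ∈ Finset.Icc 1 n, L (2 * r * k) = 5 * F (r * n) * F (r * n + r)) ∧
    (Odd n → L r * ∑ k ∈ Finset.Icc 1 n, L (2 * r * k) = L (r * n) * L (r * n + r)) :=
  stmt3_general r n hro
end

section
/- For all nonnegative integers r and n, F_{3rn} * F_{3rn+3r} = F_{rn} * F_{rn+r} * (L_{rn} * L_{rn+r} * L_{2rn+r} + L_{2r} + (-1)^{r-1}). -/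
open Finset

lemma Frec (n : ℕ) : F (n + 2) = F (n + 1) + F n := by
  unfold F; rw [Nat.fib_add_two]; push_cast; ring

lemma Fadd1 (m n : ℕ) : F (m + n + 1) = F (m + 1) * F (n + 1) + F m * F n := by
  unfold F; rw [Nat.fib_add]; push_cast; ring

lemma Fadd (m n : ℕ) : F (m + n) = F m * F (n + 1) + (F (m + 1) - F m) * F n := by
  cases m with
  | zero => simp [F]
  | succ k =>
    have h : k + 1 + n = k + n + 1 := by omega
    rw [h, Fadd1 k n]
    have h2 : F (k + 1 + 1) = F (k + 1) + F k := Frec k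
    rw [h2]; ring

lemma cass (m : ℕ) : F (m + 1) ^ 2 - F (m + 1) * F m - F m ^ 2 = (-1 : ℤ) ^ m := by
  induction m with
  | zero => simp [F]
  | succ k ih =>
    have h : F (k + 1 + 1) = F (k + 1) + F k := Frec k
    rw [h, pow_succ]
    linear_combination (-1 : ℤ) * ih

lemma LF : ∀ n, L n = 2 * F (n + 1) - F n
  | 0 => by norm_num [L, F]
  | 1 => by norm_num [L, F]
  | n + 2 => by
    have h1 : L (n + 1) = 2 * F (n + 2) - F (n + 1) := LF (n + 1)
    have h2 := LF n
    have h3 : F (n + 2) = F (n + 1) + F n := Frec n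
    have h4 : F (n + 3) = F (n + 2) + F (n + 1) := Frec (n + 1)
    show L (n + 1) + L n = 2 * F (n + 3) - F (n + 2)
    linear_combination h1 + h2 - 2 * h4 + h3

lemma key (a b : ℕ) :
    F (3 * a) * F (3 * a + 3 * b) =
      F a * F (a + b) *
        (L a * L (a + b) * L (2 * a + b) + L (2 * b) + (-1 : ℤ) ^ (b + 1)) := by
  have c1 := Fadd a b
  have c2 := Fadd1 a b
  have c3 := Fadd a a
  have c4 := Fadd1 a a
  have c5 := Fadd a (a + a)
  have c6 := Fadd1 a (a + a)
  have c7 := Fadd b b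
  have c8 := Fadd1 b b
  have c9 := Fadd b (b + b)
  have c10 := Fadd1 b (b + b)
  have c11 := Fadd (a + (a + a)) (b + (b + b))
  have c12 := Fadd (a + a) b
  have c13 := Fadd1 (a + a) b
  have hca := cass a
  have hcb := cass b
  have hsq : (F (a + 1) ^ 2 - F (a + 1) * F a - F a ^ 2) ^ 2 = 1 := by
    rw [hca, ← pow_mul, mul_comm, pow_mul]; norm_num
  rw [show 3 * a = a + (a + a) by ring, show a + (a + a) + 3 * b = a + (a + a) + (b + (b + b)) by ring,
      show 2 * a + b = a + a + b by ring, show 2 * b = b + b by ring]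
  simp only [LF]
  rw [pow_succ]
  rw [c11, c5, c6, c9, c10, c12, c13, c2, c1, c3, c4, c7, c8]
  rw [← hcb]
  linear_combination
    (5 * F a ^ 2 * F b ^ 2 * F (b + 1) + F a ^ 2 * F (b + 1) ^ 3 - 4 * F a ^ 2 * F b ^ 3 +
        4 * F a * F (a + 1) * F b ^ 3 + F a * F (a + 1) * F b * F (b + 1) ^ 2 -
        F a * F (a + 1) * F b ^ 2 * F (b + 1) - 2 * F a ^ 2 * F b * F (b + 1) ^ 2) * hsq

theorem stmt4 (r n : ℕ) :
    F (3 * r * n) * F (3 * r * n + 3 * r) =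
      F (r * n) * F (r * n + r) *
        (L (r * n) * L (r * n + r) * L (2 * r * n + r) + L (2 * r) + (-1 : ℤ) ^ (r + 1)) := by
  rw [show 3 * r * n = 3 * (r * n) by ring, show 2 * r * n + r = 2 * (r * n) + r by ring]
  exact key (r * n) r
end

section
/- For all nonnegative integers r and n, L_{3rn} * L_{3rn+3r} = L_{rn} * L_{rn+r} * (5 * F_{rn} * F_{rn+r} * L_{2rn+r} + L_{2r} + (-1)^{r-1}). -/
open Finset

lemma Lrec (n : ℕ) : L (n + 2) = L (n + 1) + L n := rfl

lemma step : ∀ m : ℕ, 2 * L (m + 1) = L m + 5 * F m ∧ 2 * F (m + 1) = L m + F m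
  | 0 => by norm_num [L, F]
  | 1 => by norm_num [L, F, Lrec, Frec]
  | m + 2 => by
    have h1 := step m
    have h2 := step (m + 1)
    rw [show m + 2 + 1 = (m + 1) + 2 from rfl]
    rw [Lrec (m + 1), Frec (m + 1), Lrec m, Frec m]
    constructor <;> linarith [h1.1, h1.2, h2.1, h2.2]

lemma addf : ∀ k m : ℕ,
    2 * L (m + k) = L m * L k + 5 * F m * F k ∧
      2 * F (m + k) = L m * F k + F m * L k
  | 0, m => by
    norm_num [L, F]
    constructor <;> ring
  | 1, m => by
    have h := step m
    have hL1 : L 1 = 1 := rfl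
    have hF1 : F 1 = 1 := by norm_num [F]
    rw [hL1, hF1]
    constructor <;> linarith [h.1, h.2]
  | k + 2, m => by
    have h1 := addf k m
    have h2 := addf (k + 1) m
    rw [show m + (k + 1) = m + k + 1 from rfl] at h2
    rw [show m + (k + 2) = m + k + 2 from rfl, Lrec (m + k), Frec (m + k),
      Lrec k, Frec k]
    obtain ⟨a1, a2⟩ := h1
    obtain ⟨b1, b2⟩ := h2
    constructor
    · linear_combination a1 + b1
    · linear_combination a2 + b2

lemma norms : ∀ n : ℕ,
    (L n ^ 2 - 5 * F n ^ 2 = 4 * (-1 : ℤ) ^ n) ∧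
      (L n * L (n + 1) - 5 * F n * F (n + 1) = 2 * (-1 : ℤ) ^ n) ∧
      (L (n + 1) ^ 2 - 5 * F (n + 1) ^ 2 = -(4 * (-1 : ℤ) ^ n))
  | 0 => by norm_num [L, F]
  | n + 1 => by
    obtain ⟨h1, h2, h3⟩ := norms n
    have hL := Lrec n
    have hF := Frec n
    have hp : (-1 : ℤ) ^ (n + 1) = -(-1 : ℤ) ^ n := by rw [pow_succ]; ring
    refine ⟨?_, ?_, ?_⟩
    · rw [hp]; linarith
    · rw [hp, hL, hF]; linear_combination h3 + h2
    · rw [hp, hL, hF]; linear_combination h3 + 2 * h2 + h1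

theorem stmt5 (r n : ℕ) :
    L (3 * r * n) * L (3 * r * n + 3 * r) =
      L (r * n) * L (r * n + r) *
        (5 * F (r * n) * F (r * n + r) * L (2 * r * n + r) + L (2 * r) + (-1 : ℤ) ^ (r + 1)) := by
  have i1 : 3 * r * n = 3 * (r * n) := by ring
  have i2 : 3 * r * n + 3 * r = 3 * (r * n + r) := by ring
  have i3 : 2 * r * n + r = 2 * (r * n) + r := by ring
  rw [i2, i1, i3]
  set m := r * n with hm
  set a := L m with ha
  set b := F m with hb
  set c := L r with hc
  set d := F r with hd
  set p := L (m + r) with hp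
  set q := F (m + r) with hq
  set X := L (2 * m + r) with hX
  set Y := L (3 * m) with hY
  set Z := L (3 * (m + r)) with hZ
  set W := L (2 * r) with hW
  set e := (-1 : ℤ) ^ m with he
  set f := (-1 : ℤ) ^ r with hf
  have H1 : 2 * p = a * c + 5 * b * d := (addf r m).1
  have H2 : 2 * q = a * d + b * c := (addf r m).2
  have hm2L : 2 * L (2 * m) = a ^ 2 + 5 * b ^ 2 := by
    have := (addf m m).1
    rw [show m + m = 2 * m by ring] at this
    linear_combination this
  have hm2F : 2 * F (2 * m) = 2 * a * b := by
    have := (addf m m).2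
    rw [show m + m = 2 * m by ring] at this
    linear_combination this
  have H3 : 4 * X = (a ^ 2 + 5 * b ^ 2) * c + 10 * a * b * d := by
    have h := (addf r (2 * m)).1
    linear_combination 2 * h + c * hm2L + 5 * d * hm2F
  have H4 : 4 * Y = a ^ 3 + 15 * a * b ^ 2 := by
    have h := (addf m (2 * m)).1
    rw [show 2 * m + m = 3 * m by ring] at h
    linear_combination 2 * h + a * hm2L + 5 * b * hm2F
  have hs2L : 2 * L (2 * (m + r)) = p ^ 2 + 5 * q ^ 2 := by
    have := (addf (m + r) (m + r)).1
    rw [show m + r + (m + r) = 2 * (m + r) by ring] at this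
    linear_combination this
  have hs2F : 2 * F (2 * (m + r)) = 2 * p * q := by
    have := (addf (m + r) (m + r)).2
    rw [show m + r + (m + r) = 2 * (m + r) by ring] at this
    linear_combination this
  have H5 : 4 * Z = p ^ 3 + 15 * p * q ^ 2 := by
    have h := (addf (m + r) (2 * (m + r))).1
    rw [show 2 * (m + r) + (m + r) = 3 * (m + r) by ring] at h
    linear_combination 2 * h + p * hs2L + 5 * q * hs2F
  have H6 : 2 * W = c ^ 2 + 5 * d ^ 2 := by
    have := (addf r r).1
    rw [show r + r = 2 * r by ring] at this
    linear_combination this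
  have H7 : a ^ 2 - 5 * b ^ 2 = 4 * e := (norms m).1
  have H8 : c ^ 2 - 5 * d ^ 2 = 4 * f := (norms r).1
  have H9 : e ^ 2 = 1 := by
    rw [he, ← pow_mul, mul_comm, pow_mul]
    norm_num
  have hodd : (-1 : ℤ) ^ (r + 1) = -f := by
    rw [hf, pow_succ]; ring
  rw [hodd]
  have key : 512 * (Y * Z) = 512 * (a * p * (5 * b * q * X + W + -f)) := by
    linear_combination (256*a*f + -640*a*d^2 + -128*a*c^2 + 3600*a*b^2*q^2 + 240*a*b^2*p^2 + 600*a*b^3*d*p + -1600*a*b^3*c*q + 1500*a*b^4*d^2 + -3200*a^2*b^2*d*q + 120*a^2*b^2*c*p + 600*a^2*b^3*c*d + 240*a^3*q^2 + 16*a^3*p^2 + 40*a^3*b*d*p + -320*a^3*b*c*q + 100*a^3*b^2*d^2 + 60*a^3*b^2*c^2 + 8*a^4*c*p + 40*a^4*b*c*d + 4*a^5*c^2) * H1 + (9000*a*b^3*d*q + 500*a*b^4*c*d + 1800*a^2*b^2*c*q + -3500*a^2*b^3*d^2 + 100*a^2*b^3*c^2 + 600*a^3*b*d*q + -1200*a^3*b^2*c*d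 + 120*a^4*c*q + 300*a^4*b*d^2 + -100*a^4*b*c^2 + 60*a^5*c*d) * H2 + (-640*a*b*p*q) * H3 + (480*p*q^2 + 32*p^3) * H4 + (128*Y) * H5 + (-256*a*p) * H6 + (256*c*f + -640*c*d^2 + 960*c*d^2*e^2 + -128*c^3 + 64*c^3*e^2 + 1200*a*b*d^3*e + 80*a*b*c^2*d*e + -1500*a*b^3*d^3 + -100*a*b^3*c^2*d + 240*a^2*c*d^2*e + 16*a^2*c^3*e + -300*a^2*b^2*c*d^2 + -20*a^2*b^2*c^3 + 300*a^3*b*d^3 + 20*a^3*b*c^2*d + 60*a^4*c*d^2 + 4*a^4*c^3) * H7 + (-512*c*e + 256*c*e^3 + -640*b^2*c + 320*b^2*c*e^2 + -640*a*b*d + 320*a*b*d*e^2) * H8 + (1024*c*e*f + 5120*c*d^2*e + 1280*b^2*c*f + 6400*b^2*c*d^2 + 1280*a*b*d*f + 6400*a*b*d^3) * H9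
  have h512 : (512 : ℤ) ≠ 0 := by norm_num
  exact mul_left_cancel₀ h512 key
end

section
/- For all nonnegative integers r and n, F_{3rn} * F_{3rn+3r} = F_{rn} * F_{rn+r} * (L_{2rn+r}^2 + (-1)^{nr} * L_{rn+r}^2 + (-1)^{(n-1)r} * L_{rn}^2 + L_r^2 - (-1)^r * 7). -/
open Finset

namespace Stmt8Aux

def u : ℤ√5 := ⟨1, 1⟩
def v : ℤ√5 := ⟨1, -1⟩
def s5 : ℤ√5 := ⟨0, 1⟩

lemma hu2 : u ^ 2 = 2 * u + 4 := by decide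
lemma hv2 : v ^ 2 = 2 * v + 4 := by decide
lemma huv : u * v = -4 := by decide
lemma hs5 : s5 * s5 = 5 := by decide

lemma key (t : ℕ) : u ^ t + v ^ t = ((2 ^ t * L t : ℤ) : ℤ√5) ∧
    u ^ t - v ^ t = ((2 ^ t * F t : ℤ) : ℤ√5) * s5 := by
  induction t using Nat.twoStepInduction with
  | zero => constructor <;> simp [L, F] <;> decide
  | one => constructor <;> simp [L, F] <;> decide
  | more t ih1 ih2 =>
    have hru : u ^ (t + 2) = 2 * u ^ (t + 1) + 4 * u ^ t := by
      have : u ^ (t + 2) = u ^ t * u ^ 2 := by ring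
      rw [this, hu2]; ring
    have hrv : v ^ (t + 2) = 2 * v ^ (t + 1) + 4 * v ^ t := by
      have : v ^ (t + 2) = v ^ t * v ^ 2 := by ring
      rw [this, hv2]; ring
    have hL : L (t + 2) = L (t + 1) + L t := rfl
    have hF : F (t + 2) = F (t + 1) + F t := by
      simp [F, Nat.fib_add_two]; ring
    constructor
    · rw [hru, hrv]
      have e : 2 * u ^ (t+1) + 4 * u ^ t + (2 * v ^ (t+1) + 4 * v ^ t)
          = 2 * (u ^ (t+1) + v ^ (t+1)) + 4 * (u ^ t + v ^ t) := by ring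
      rw [e, ih2.1, ih1.1, hL]
      push_cast
      ring
    · rw [hru, hrv]
      have e : 2 * u ^ (t+1) + 4 * u ^ t - (2 * v ^ (t+1) + 4 * v ^ t)
          = 2 * (u ^ (t+1) - v ^ (t+1)) + 4 * (u ^ t - v ^ t) := by ring
      rw [e, ih2.2, ih1.2, hF]
      push_cast
      ring

lemma key2 (m k : ℕ) : F (3 * m) * F (3 * m + 3 * k) =
    F m * F (m + k) *
      (L (2 * m + k) ^ 2 + (-1 : ℤ) ^ m * L (m + k) ^ 2 +
        (-1 : ℤ) ^ (m + k) * L m ^ 2 + L k ^ 2 - (-1 : ℤ) ^ k * 7) := by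
  have E : (u ^ (3*m) - v ^ (3*m)) * (u ^ (3*m+3*k) - v ^ (3*m+3*k)) =
      (u ^ m - v ^ m) * (u ^ (m+k) - v ^ (m+k)) *
        ((u ^ (2*m+k) + v ^ (2*m+k)) ^ 2 + (u*v) ^ m * (u ^ (m+k) + v ^ (m+k)) ^ 2 +
          (u*v) ^ (m+k) * (u ^ m + v ^ m) ^ 2 + (u*v) ^ (2*m) * (u ^ k + v ^ k) ^ 2 -
          7 * (u*v) ^ (2*m+k)) := by
    ring
  rw [(key (3*m)).2, (key (3*m+3*k)).2, (key m).2, (key (m+k)).2,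
      (key (2*m+k)).1, (key (m+k)).1, (key m).1, (key k).1, huv] at E
  have h4 : ∀ j : ℕ, ((-4 : ℤ√5)) ^ j = (((-1 : ℤ) ^ j * 2 ^ (2*j) : ℤ) : ℤ√5) := by
    intro j
    push_cast
    rw [show ((-4 : ℤ√5)) = -1 * 2 ^ 2 by norm_num, mul_pow, ← pow_mul]
  rw [h4 m, h4 (m+k), h4 (2*m), h4 (2*m+k)] at E
  have E2 : (((2 ^ (3*m) * F (3*m)) * (2 ^ (3*m+3*k) * F (3*m+3*k)) * 5 : ℤ) : ℤ√5) =
      (((2 ^ m * F m) * (2 ^ (m+k) * F (m+k)) * 5 *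
        ((2 ^ (2*m+k) * L (2*m+k)) ^ 2 +
          ((-1 : ℤ) ^ m * 2 ^ (2*m)) * (2 ^ (m+k) * L (m+k)) ^ 2 +
          ((-1 : ℤ) ^ (m+k) * 2 ^ (2*(m+k))) * (2 ^ m * L m) ^ 2 +
          ((-1 : ℤ) ^ (2*m) * 2 ^ (2*(2*m))) * (2 ^ k * L k) ^ 2 -
          7 * ((-1 : ℤ) ^ (2*m+k) * 2 ^ (2*(2*m+k)))) : ℤ) : ℤ√5) := by
    push_cast [← hs5] at E ⊢
    linear_combination E
  have G := Int.cast_injective (α := ℤ√5) E2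
  have h5 : ((5 : ℤ) * 2 ^ (6*m+3*k)) ≠ 0 := by positivity
  apply mul_left_cancel₀ h5
  have hm1 : ((-1 : ℤ)) ^ (2*m) = 1 := by
    rw [pow_mul]; norm_num
  have hm2 : ((-1 : ℤ)) ^ (2*m+k) = (-1) ^ k := by
    rw [pow_add, hm1, one_mul]
  rw [hm1, hm2] at G
  linear_combination G
end Stmt8Aux

theorem stmt8 (r n : ℕ) :
    F (3 * r * n) * F (3 * r * n + 3 * r) =
      F (r * n) * F (r * n + r) *
        (L (2 * r * n + r) ^ 2 + (-1 : ℤ) ^ (n * r) * L (r * n + r) ^ 2 +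
          (-1 : ℤ) ^ ((n + 1) * r) * L (r * n) ^ 2 + L r ^ 2 - (-1 : ℤ) ^ r * 7) := by
  have h := Stmt8Aux.key2 (r * n) r
  rw [show 3 * (r * n) = 3 * r * n by ring, show 2 * (r * n) = 2 * r * n by ring] at h
  rw [show n * r = r * n by ring, show (n + 1) * r = r * n + r by ring]
  exact h
end

section
/- For all positive integers r and n with r odd: if n is even then L_{3r} * (∑_{k=1}^n F_{2rk}^3) = F_{rn} * L_{rn+r} * (L_{rn} * F_{rn+r} * F_{2rn+r} - 2*F_r^2), and if n is odd then L_{3r} * (∑_{k=1}^n F_{2rk}^3) = L_{rn} * F_{rn+r} * (F_{rn} * L_{rn+r} * F_{2rn+r} - 2*F_r^2). -/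
/-!
Both parity cases are the single closed form
`L_{3r} ∑_{k=1}^n F_{2rk}^3 = F_{2rn} F_{2rn+r} F_{2rn+2r} - 2 F_r^2 (F_{2rn+r} - F_r)`,
rewritten with `F_{2m} = F_m L_m`, `F_m L_{m+r} = F_{2m+r} - (-1)^m F_r` and
`L_m F_{m+r} = F_{2m+r} + (-1)^m F_r` for `m = rn`.
The closed form telescopes, and its increment is an identity in Binet's formulas
`√5 F_k = φ^k - ψ^k`, `L_k = φ^k + ψ^k`: for `r` odd and `a` even, `ψ^r = -φ^{-r}` and
`ψ^a = φ^{-a}`, so it becomes a rational identity in `φ^r` and `φ^a`.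
-/

open Finset

open Real goldenRatio

lemma cast_fib_eq (n : ℕ) : (F n : ℝ) = (φ ^ n - ψ ^ n) / √5 := by
  rw [F, Int.cast_natCast, coe_fib_eq]

lemma cast_lucas_eq : ∀ n, (L n : ℝ) = φ ^ n + ψ ^ n
  | 0 => by norm_num [L]
  | 1 => by simp [L]
  | n + 2 => by
    rw [L, Int.cast_add, cast_lucas_eq (n + 1), cast_lucas_eq n]
    linear_combination -(φ ^ n * goldenRatio_sq + ψ ^ n * goldenConj_sq)

lemma goldenConj_pow (n : ℕ) : ψ ^ n = (-1) ^ n * (φ ^ n)⁻¹ := by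
  rw [← neg_neg ψ, ← inv_goldenRatio, neg_pow, inv_pow]

lemma fib_mul_lucas_add (m s : ℕ) : F m * L (m + s) = F (2 * m + s) - (-1) ^ m * F s := by
  apply Int.cast_injective (α := ℝ)
  push_cast
  simp only [cast_fib_eq, cast_lucas_eq]
  rw [← goldenRatio_mul_goldenConj, mul_pow]
  -- `φ` and `ψ` are reducible abbreviations, which `ring` would otherwise unfold
  generalize φ = p, ψ = q
  field_simp
  ring

lemma lucas_mul_fib_add (m s : ℕ) : L m * F (m + s) = F (2 * m + s) + (-1) ^ m * F s := by
  apply Int.cast_injective (α := ℝ)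
  push_cast
  simp only [cast_fib_eq, cast_lucas_eq]
  rw [← goldenRatio_mul_goldenConj, mul_pow]
  generalize φ = p, ψ = q
  field_simp
  ring

lemma fib_two_mul_eq_fib_mul_lucas (m : ℕ) : F (2 * m) = F m * L m := by
  simpa [F] using (fib_mul_lucas_add m 0).symm

lemma lucas_three_mul_mul_fib_cube {a s : ℕ} (ha : Even a) (hs : Odd s) :
    L (3 * s) * F (a + 2 * s) ^ 3 = F (a + 2 * s) * F (a + 3 * s) * F (a + 4 * s)
      - F a * F (a + s) * F (a + 2 * s) - 2 * F s ^ 2 * (F (a + 3 * s) - F (a + s)) := by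
  apply Int.cast_injective (α := ℝ)
  push_cast
  simp only [cast_fib_eq, cast_lucas_eq, pow_add, pow_mul', goldenConj_pow, ha.neg_one_pow,
    hs.neg_one_pow]
  have h5 : √5 ≠ 0 := by positivity
  have hx : φ ^ s ≠ 0 := pow_ne_zero _ goldenRatio_ne_zero
  have hu : φ ^ a ≠ 0 := pow_ne_zero _ goldenRatio_ne_zero
  generalize φ ^ s = x at *
  generalize φ ^ a = u at *
  field_simp
  ring

theorem lucas_three_mul_mul_sum_fib_cube {r : ℕ} (hr : Odd r) (n : ℕ) :
    L (3 * r) * ∑ k ∈ Icc 1 n, F (2 * r * k) ^ 3 =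
      F (2 * r * n) * F (2 * r * n + r) * F (2 * r * n + 2 * r)
        - 2 * F r ^ 2 * (F (2 * r * n + r) - F r) := by
  induction n with
  | zero => simp [F]
  | succ n ih =>
    have step := lucas_three_mul_mul_fib_cube (even_two_mul (r * n)) hr
    rw [sum_Icc_succ_top (by omega), mul_add, ih]
    rw [show 2 * (r * n) = 2 * r * n by ring, show 2 * r * n + 2 * r = 2 * r * (n + 1) by ring,
      show 2 * r * n + 3 * r = 2 * r * (n + 1) + r by ring,
      show 2 * r * n + 4 * r = 2 * r * (n + 1) + 2 * r by ring] at step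
    linear_combination step

theorem stmt12_general (r n : ℕ) (hro : Odd r) :
    (Even n → L (3 * r) * ∑ k ∈ Finset.Icc 1 n, F (2 * r * k) ^ 3 =
      F (r * n) * L (r * n + r) * (L (r * n) * F (r * n + r) * F (2 * r * n + r) - 2 * F r ^ 2)) ∧
    (Odd n → L (3 * r) * ∑ k ∈ Finset.Icc 1 n, F (2 * r * k) ^ 3 =
      L (r * n) * F (r * n + r) * (F (r * n) * L (r * n + r) * F (2 * r * n + r) - 2 * F r ^ 2)) := by
  rw [lucas_three_mul_mul_sum_fib_cube hro n, show 2 * r * n = 2 * (r * n) by ring,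
    show 2 * (r * n) + 2 * r = 2 * (r * n + r) by ring]
  have hsign : (-1 : ℤ) ^ (r * n) = (-1) ^ n := by rw [pow_mul, hro.neg_one_pow]
  generalize r * n = m at hsign ⊢
  have h2m := fib_two_mul_eq_fib_mul_lucas m
  have h2mr := fib_two_mul_eq_fib_mul_lucas (m + r)
  refine ⟨fun hn => ?_, fun hn => ?_⟩
  · have hF := fib_mul_lucas_add m r
    rw [hsign, hn.neg_one_pow] at hF
    linear_combination F (2 * m + r) * F (2 * (m + r)) * h2m
      + F m * L m * F (2 * m + r) * h2mr + 2 * F r ^ 2 * hF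
  · have hL := lucas_mul_fib_add m r
    rw [hsign, hn.neg_one_pow] at hL
    linear_combination F (2 * m + r) * F (2 * (m + r)) * h2m
      + F m * L m * F (2 * m + r) * h2mr + 2 * F r ^ 2 * hL

theorem stmt12 (r n : ℕ) (hr : 0 < r) (hn : 0 < n) (hro : Odd r) :
    (Even n → L (3 * r) * ∑ k ∈ Finset.Icc 1 n, F (2 * r * k) ^ 3 =
      F (r * n) * L (r * n + r) * (L (r * n) * F (r * n + r) * F (2 * r * n + r) - 2 * F r ^ 2)) ∧
    (Odd n → L (3 * r) * ∑ k ∈ Finset.Icc 1 n, F (2 * r * k) ^ 3 =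
      L (r * n) * F (r * n + r) * (F (r * n) * L (r * n + r) * F (2 * r * n + r) - 2 * F r ^ 2)) :=
  stmt12_general r n hro
end
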